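/- arXiv:2308.00263 — 2 statements merged into one kernel-verified Lean document; each statement's English description precedes it below -/
import Mathlib

section
/- Let (Ω, μ) be a probability space, d ≥ 1, δ ∈ (0, 1], and η_g a real number. Let (x^t)_{t≥0}, (x̂^t)_{t≥0}, (Δ^t)_{t≥0} be sequences of square-integrable random vectors in ℝ^d such that (i) x̂^0 = x^0 almost surely, (ii) x^{t+1} = x^t + η_g Δ^t almost surely for every t, and (iii) E[‖x̂^{t+1} − x^{t+1}‖²] ≤ (1 − δ) E[‖x^{t+1} − x̂^t‖²] for every t. Then for every t ≥ 0: E[‖x^t − x̂^t‖²] ≤ (2/δ) η_g² ∑_{s=0}^{t−1} (1 − δ/2)^{t−1−s} E[‖Δ^s‖²]. -/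
/-!
Write `e t = E‖x^t - x̂^t‖²`. Since `x^{t+1} - x̂^t = (x^t - x̂^t) + η_g Δ^t`, the compression
bound and Young's inequality `‖u + v‖² ≤ (1 + δ/2)‖u‖² + (1 + 2/δ)‖v‖²` give the one-step
contraction `e (t+1) ≤ (1 - δ/2) e t + (2/δ) η_g² E‖Δ^t‖²`; unrolling it from `e 0 = 0`
yields the geometric sum.
-/

open MeasureTheory

lemma one_sub_mul_add_sq_le {δ : ℝ} (hδ0 : 0 < δ) (hδ1 : δ ≤ 1) (a b : ℝ) :
    (1 - δ) * (a + b) ^ 2 ≤ (1 - δ / 2) * a ^ 2 + (2 / δ) * b ^ 2 := by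
  have key : δ * ((1 - δ) * (a + b) ^ 2) ≤ δ * ((1 - δ / 2) * a ^ 2 + (2 / δ) * b ^ 2) := by
    have hδinv : δ * (2 / δ) = 2 := by field_simp
    rw [mul_add, ← mul_assoc δ (2 / δ), hδinv]
    nlinarith [sq_nonneg (δ * a - 2 * (1 - δ) * b),
      mul_nonneg (mul_nonneg hδ0.le (by linarith : (0 : ℝ) ≤ 3 - δ)) (sq_nonneg b)]
  exact le_of_mul_le_mul_left key hδ0

lemma one_sub_mul_norm_add_sq_le {E : Type*} [SeminormedAddCommGroup E] {δ : ℝ}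
    (hδ0 : 0 < δ) (hδ1 : δ ≤ 1) (u v : E) :
    (1 - δ) * ‖u + v‖ ^ 2 ≤ (1 - δ / 2) * ‖u‖ ^ 2 + (2 / δ) * ‖v‖ ^ 2 :=
  calc (1 - δ) * ‖u + v‖ ^ 2 ≤ (1 - δ) * (‖u‖ + ‖v‖) ^ 2 := by
        gcongr
        exact norm_add_le u v
    _ ≤ _ := one_sub_mul_add_sq_le hδ0 hδ1 _ _

lemma one_sub_mul_integral_norm_add_sq_le {Ω E : Type*} [MeasurableSpace Ω] {μ : Measure Ω}
    [NormedAddCommGroup E] {δ : ℝ} (hδ0 : 0 < δ) (hδ1 : δ ≤ 1) {f g : Ω → E}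
    (hf : MemLp f 2 μ) (hg : MemLp g 2 μ) :
    (1 - δ) * ∫ ω, ‖f ω + g ω‖ ^ 2 ∂μ ≤
      (1 - δ / 2) * ∫ ω, ‖f ω‖ ^ 2 ∂μ + (2 / δ) * ∫ ω, ‖g ω‖ ^ 2 ∂μ := by
  have hf2 := hf.norm.integrable_sq
  have hg2 := hg.norm.integrable_sq
  rw [← integral_const_mul, ← integral_const_mul, ← integral_const_mul,
    ← integral_add (hf2.const_mul _) (hg2.const_mul _)]
  exact integral_mono_of_nonneg
    (ae_of_all _ fun ω => mul_nonneg (by linarith) (sq_nonneg _))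
    ((hf2.const_mul _).add (hg2.const_mul _))
    (ae_of_all _ fun ω => one_sub_mul_norm_add_sq_le hδ0 hδ1 (f ω) (g ω))

lemma le_sum_pow_mul_of_le_mul_add {a b : ℕ → ℝ} {q : ℝ} (hq : 0 ≤ q) (h0 : a 0 ≤ 0)
    (hstep : ∀ t, a (t + 1) ≤ q * a t + b t) :
    ∀ t, a t ≤ ∑ s ∈ Finset.range t, q ^ (t - 1 - s) * b s
  | 0 => by simpa using h0
  | t + 1 => by
    have ih := le_sum_pow_mul_of_le_mul_add hq h0 hstep t
    have hsum : ∑ s ∈ Finset.range (t + 1), q ^ (t + 1 - 1 - s) * b s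
        = q * ∑ s ∈ Finset.range t, q ^ (t - 1 - s) * b s + b t := by
      rw [Finset.sum_range_succ, Finset.mul_sum, Nat.add_sub_cancel, Nat.sub_self, pow_zero,
        one_mul]
      congr 1
      refine Finset.sum_congr rfl fun s hs => ?_
      rw [show t - s = t - 1 - s + 1 by have := Finset.mem_range.mp hs; omega, pow_succ]
      ring
    rw [hsum]
    linarith [hstep t, mul_le_mul_of_nonneg_left ih hq]

theorem hidden_state_bound_general_general
    {Ω : Type*} [MeasurableSpace Ω] (μ : Measure Ω)
    (d : ℕ) (δ : ℝ) (hδ : δ ∈ Set.Ioc (0 : ℝ) 1) (ηg : ℝ)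
    (x xh Δ : ℕ → Ω → EuclideanSpace ℝ (Fin d))
    (hxL2 : ∀ t, MemLp (x t) 2 μ)
    (hxhL2 : ∀ t, MemLp (xh t) 2 μ)
    (hΔL2 : ∀ t, MemLp (Δ t) 2 μ)
    (h0 : ∀ᵐ ω ∂μ, xh 0 ω = x 0 ω)
    (hstep : ∀ t, ∀ᵐ ω ∂μ, x (t + 1) ω = x t ω + ηg • Δ t ω)
    (hcomp : ∀ t, ∫ ω, ‖xh (t + 1) ω - x (t + 1) ω‖ ^ 2 ∂μ ≤
      (1 - δ) * ∫ ω, ‖x (t + 1) ω - xh t ω‖ ^ 2 ∂μ) :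
    ∀ t, ∫ ω, ‖x t ω - xh t ω‖ ^ 2 ∂μ ≤
      (2 / δ) * ηg ^ 2 * ∑ s ∈ Finset.range t, (1 - δ / 2) ^ (t - 1 - s) * ∫ ω, ‖Δ s ω‖ ^ 2 ∂μ := by
  obtain ⟨hδ0, hδ1⟩ := hδ
  have hinit : ∫ ω, ‖x 0 ω - xh 0 ω‖ ^ 2 ∂μ ≤ 0 := by
    rw [integral_congr_ae (h0.mono fun ω hω => by simp [hω] : _ =ᵐ[μ] fun _ => (0 : ℝ))]
    simp
  have hcontract : ∀ t, ∫ ω, ‖x (t + 1) ω - xh (t + 1) ω‖ ^ 2 ∂μ ≤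
      (1 - δ / 2) * ∫ ω, ‖x t ω - xh t ω‖ ^ 2 ∂μ +
        (2 / δ) * ηg ^ 2 * ∫ ω, ‖Δ t ω‖ ^ 2 ∂μ := fun t => by
    have hsplit : ∫ ω, ‖x (t + 1) ω - xh t ω‖ ^ 2 ∂μ =
        ∫ ω, ‖(x t ω - xh t ω) + ηg • Δ t ω‖ ^ 2 ∂μ :=
      integral_congr_ae <| (hstep t).mono fun ω hω => by dsimp only; rw [hω, sub_add_eq_add_sub]
    have hyoung := one_sub_mul_integral_norm_add_sq_le hδ0 hδ1
      ((hxL2 t).sub (hxhL2 t)) ((hΔL2 t).const_smul ηg)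
    simp only [Pi.sub_apply, Pi.smul_apply, norm_smul, mul_pow, Real.norm_eq_abs, sq_abs,
      integral_const_mul] at hyoung
    have hcomp' := hcomp t
    simp_rw [norm_sub_rev (xh (t + 1) _)] at hcomp'
    rw [hsplit] at hcomp'
    linarith
  intro t
  refine (le_sum_pow_mul_of_le_mul_add (a := fun t => ∫ ω, ‖x t ω - xh t ω‖ ^ 2 ∂μ)
    (b := fun t => (2 / δ) * ηg ^ 2 * ∫ ω, ‖Δ t ω‖ ^ 2 ∂μ) (by linarith) hinit hcontract
    t).trans_eq ?_
  rw [Finset.mul_sum]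
  exact Finset.sum_congr rfl fun s _ => by ring

/-- Lemma A.6 of the paper: hidden state bound with a general (possibly biased) quantizer. -/
theorem hidden_state_bound_general
    {Ω : Type*} [MeasurableSpace Ω] (μ : Measure Ω) [IsProbabilityMeasure μ]
    (d : ℕ) (hd : 1 ≤ d) (δ : ℝ) (hδ : δ ∈ Set.Ioc (0 : ℝ) 1) (ηg : ℝ)
    (x xh Δ : ℕ → Ω → EuclideanSpace ℝ (Fin d))
    (hxL2 : ∀ t, MemLp (x t) 2 μ)
    (hxhL2 : ∀ t, MemLp (xh t) 2 μ)
    (hΔL2 : ∀ t, MemLp (Δ t) 2 μ)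
    (h0 : ∀ᵐ ω ∂μ, xh 0 ω = x 0 ω)
    (hstep : ∀ t, ∀ᵐ ω ∂μ, x (t + 1) ω = x t ω + ηg • Δ t ω)
    (hcomp : ∀ t, ∫ ω, ‖xh (t + 1) ω - x (t + 1) ω‖ ^ 2 ∂μ ≤
      (1 - δ) * ∫ ω, ‖x (t + 1) ω - xh t ω‖ ^ 2 ∂μ) :
    ∀ t, ∫ ω, ‖x t ω - xh t ω‖ ^ 2 ∂μ ≤
      (2 / δ) * ηg ^ 2 * ∑ s ∈ Finset.range t, (1 - δ / 2) ^ (t - 1 - s) * ∫ ω, ‖Δ s ω‖ ^ 2 ∂μ :=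
  hidden_state_bound_general_general μ d δ hδ ηg x xh Δ hxL2 hxhL2 hΔL2 h0 hstep hcomp
end

section
/- Let (Ω, μ) be a probability space, d ≥ 1, δ_c ∈ (0, 1], let η > 0 be real, let K ≥ 1 and τ ≥ 1 be natural numbers, and let B ≥ 0. For each index i in a finite set of size τ·K, let u_i : Ω → ℝ^d be a square-integrable random vector with E[‖u_i‖²] ≤ B, and let Q_i : Ω → ℝ^d be square-integrable random vectors such that (i) E[‖Q_i − u_i‖²] ≤ (1 − δ_c) E[‖u_i‖²] for every i, (ii) E[⟨Q_i − u_i, Q_j − u_j⟩] = 0 whenever i ≠ j, and (iii) E[⟨Q_i − u_i, ∑_j u_j⟩] = 0 for every i. Then E[‖(η/K) ∑_i Q_i‖²] ≤ η² τ² B (1 + (1 − δ_c)/(K·τ)). -/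
/-!
Write `Q i = u i + e i` with `e i = Q i - u i`. Since the errors `e i` are orthogonal in `L²` to
`∑ u` and to each other, `E‖∑ Q‖² = E‖∑ u‖² + ∑ E‖e i‖²`. Cauchy–Schwarz bounds the first term
by `n² B` and the compression bound bounds the second by `(1 - δc) n B`, where `n = τ K`; the
factor `(η / K)²` then gives the claim.
-/

open MeasureTheory Finset
open scoped RealInnerProductSpace

namespace MeasureTheory

variable {Ω E ι : Type*} [MeasurableSpace Ω] {μ : Measure Ω} [NormedAddCommGroup E]

theorem MemLp.integrable_norm_sq {f : Ω → E} (hf : MemLp f 2 μ) :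
    Integrable (fun ω => ‖f ω‖ ^ 2) μ :=
  (memLp_two_iff_integrable_sq_norm hf.1).1 hf

theorem integral_norm_sum_sq_le_card_mul {s : Finset ι} {f : ι → Ω → E}
    (hf : ∀ i ∈ s, MemLp (f i) 2 μ) :
    ∫ ω, ‖∑ i ∈ s, f i ω‖ ^ 2 ∂μ ≤ #s * ∑ i ∈ s, ∫ ω, ‖f i ω‖ ^ 2 ∂μ := by
  have hpointwise : ∀ ω, ‖∑ i ∈ s, f i ω‖ ^ 2 ≤ #s * ∑ i ∈ s, ‖f i ω‖ ^ 2 := fun ω =>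
    (pow_le_pow_left₀ (norm_nonneg _) (norm_sum_le s _) 2).trans sq_sum_le_card_mul_sum_sq
  have hint : ∀ i ∈ s, Integrable (fun ω => ‖f i ω‖ ^ 2) μ := fun i hi =>
    (hf i hi).integrable_norm_sq
  calc ∫ ω, ‖∑ i ∈ s, f i ω‖ ^ 2 ∂μ ≤ ∫ ω, #s * ∑ i ∈ s, ‖f i ω‖ ^ 2 ∂μ :=
        integral_mono (memLp_finsetSum s hf).integrable_norm_sq
          ((integrable_finsetSum s hint).const_mul _) hpointwise
    _ = #s * ∑ i ∈ s, ∫ ω, ‖f i ω‖ ^ 2 ∂μ := by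
        rw [integral_const_mul, integral_finsetSum s hint]

variable [InnerProductSpace ℝ E]

theorem MemLp.integrable_inner {f g : Ω → E} (hf : MemLp f 2 μ) (hg : MemLp g 2 μ) :
    Integrable (fun ω => ⟪f ω, g ω⟫) μ := by
  refine (L2.integrable_inner (𝕜 := ℝ) (hf.toLp f) (hg.toLp g)).congr ?_
  filter_upwards [hf.coeFn_toLp, hg.coeFn_toLp] with ω hfω hgω
  rw [hfω, hgω]

theorem integral_inner_sum_left {s : Finset ι} {f : ι → Ω → E} {g : Ω → E}
    (hf : ∀ i ∈ s, MemLp (f i) 2 μ) (hg : MemLp g 2 μ) :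
    ∫ ω, ⟪∑ i ∈ s, f i ω, g ω⟫ ∂μ = ∑ i ∈ s, ∫ ω, ⟪f i ω, g ω⟫ ∂μ := by
  simp_rw [sum_inner]
  exact integral_finsetSum s fun i hi => (hf i hi).integrable_inner hg

theorem integral_norm_add_sq_of_integral_inner_eq_zero {f g : Ω → E}
    (hf : MemLp f 2 μ) (hg : MemLp g 2 μ) (hfg : ∫ ω, ⟪f ω, g ω⟫ ∂μ = 0) :
    ∫ ω, ‖f ω + g ω‖ ^ 2 ∂μ = ∫ ω, ‖f ω‖ ^ 2 ∂μ + ∫ ω, ‖g ω‖ ^ 2 ∂μ := by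
  have hinner := (hf.integrable_inner hg).const_mul 2
  simp_rw [norm_add_sq_real]
  rw [integral_add ?_ hg.integrable_norm_sq, integral_add hf.integrable_norm_sq hinner,
    integral_const_mul, hfg, mul_zero, add_zero]
  exact hf.integrable_norm_sq.add hinner

theorem integral_norm_sum_sq_of_pairwise_integral_inner_eq_zero {s : Finset ι}
    {f : ι → Ω → E} (hf : ∀ i ∈ s, MemLp (f i) 2 μ)
    (horth : ∀ i ∈ s, ∀ j ∈ s, i ≠ j → ∫ ω, ⟪f i ω, f j ω⟫ ∂μ = 0) :
    ∫ ω, ‖∑ i ∈ s, f i ω‖ ^ 2 ∂μ = ∑ i ∈ s, ∫ ω, ‖f i ω‖ ^ 2 ∂μ := by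
  have hexpand : ∀ ω, ‖∑ i ∈ s, f i ω‖ ^ 2 = ∑ i ∈ s, ∑ j ∈ s, ⟪f i ω, f j ω⟫ := fun ω => by
    rw [← real_inner_self_eq_norm_sq, sum_inner]
    simp only [inner_sum]
  have hint : ∀ i ∈ s, ∀ j ∈ s, Integrable (fun ω => ⟪f i ω, f j ω⟫) μ := fun i hi j hj =>
    (hf i hi).integrable_inner (hf j hj)
  simp_rw [hexpand]
  rw [integral_finsetSum s fun i hi => integrable_finsetSum s (hint i hi)]
  refine sum_congr rfl fun i hi => ?_
  rw [integral_finsetSum s (hint i hi), sum_eq_single_of_mem i hi]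
  · simp_rw [real_inner_self_eq_norm_sq]
  · exact fun j hj hji => horth i hi j hj hji.symm

theorem integral_norm_sum_sq_le_of_orthogonal_compression_errors [Fintype ι] {u Q : ι → Ω → E}
    {δ B : ℝ} (hδ : δ ≤ 1) (hu : ∀ i, MemLp (u i) 2 μ) (hQ : ∀ i, MemLp (Q i) 2 μ)
    (hubd : ∀ i, ∫ ω, ‖u i ω‖ ^ 2 ∂μ ≤ B)
    (hcomp : ∀ i, ∫ ω, ‖Q i ω - u i ω‖ ^ 2 ∂μ ≤ (1 - δ) * ∫ ω, ‖u i ω‖ ^ 2 ∂μ)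
    (huncorr : ∀ i j, i ≠ j → ∫ ω, ⟪Q i ω - u i ω, Q j ω - u j ω⟫ ∂μ = 0)
    (horth : ∀ i, ∫ ω, ⟪Q i ω - u i ω, ∑ j, u j ω⟫ ∂μ = 0) :
    ∫ ω, ‖∑ i, Q i ω‖ ^ 2 ∂μ ≤
      Fintype.card ι ^ 2 * B + (1 - δ) * (Fintype.card ι * B) := by
  set e : ι → Ω → E := fun i ω => Q i ω - u i ω
  have he : ∀ i, MemLp (e i) 2 μ := fun i => (hQ i).sub (hu i)
  have hsum_u : MemLp (fun ω => ∑ i, u i ω) 2 μ := memLp_finsetSum _ fun i _ => hu i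
  have hsum_e : MemLp (fun ω => ∑ i, e i ω) 2 μ := memLp_finsetSum _ fun i _ => he i
  have hmoments : ∑ i, ∫ ω, ‖u i ω‖ ^ 2 ∂μ ≤ Fintype.card ι * B := by
    simpa using sum_le_sum fun i (_ : i ∈ univ) => hubd i
  have hcross : ∫ ω, ⟪∑ i, e i ω, ∑ i, u i ω⟫ ∂μ = 0 := by
    rw [integral_inner_sum_left (fun i _ => he i) hsum_u]
    exact sum_eq_zero fun i _ => horth i
  have hsplit : ∀ ω, ∑ i, Q i ω = ∑ i, e i ω + ∑ i, u i ω := fun ω => by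
    rw [← sum_add_distrib]
    simp [e]
  have hu_bound : ∫ ω, ‖∑ i, u i ω‖ ^ 2 ∂μ ≤ Fintype.card ι ^ 2 * B := by
    calc ∫ ω, ‖∑ i, u i ω‖ ^ 2 ∂μ ≤ Fintype.card ι * ∑ i, ∫ ω, ‖u i ω‖ ^ 2 ∂μ :=
          integral_norm_sum_sq_le_card_mul fun i _ => hu i
      _ ≤ Fintype.card ι * (Fintype.card ι * B) := by gcongr
      _ = Fintype.card ι ^ 2 * B := by ring
  have he_bound : ∫ ω, ‖∑ i, e i ω‖ ^ 2 ∂μ ≤ (1 - δ) * (Fintype.card ι * B) := by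
    rw [integral_norm_sum_sq_of_pairwise_integral_inner_eq_zero (fun i _ => he i)
      fun i _ j _ hij => huncorr i j hij]
    calc ∑ i, ∫ ω, ‖e i ω‖ ^ 2 ∂μ ≤ ∑ i, (1 - δ) * ∫ ω, ‖u i ω‖ ^ 2 ∂μ :=
          sum_le_sum fun i _ => hcomp i
      _ ≤ (1 - δ) * (Fintype.card ι * B) := by
          rw [← mul_sum]
          exact mul_le_mul_of_nonneg_left hmoments (by linarith)
  simp_rw [hsplit]
  rw [integral_norm_add_sq_of_integral_inner_eq_zero hsum_e hsum_u hcross]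
  linarith

end MeasureTheory

theorem staleness_bound_general
    {Ω : Type*} [MeasurableSpace Ω] (μ : Measure Ω)
    (d : ℕ) (δc : ℝ) (hδc : δc ∈ Set.Ioc (0 : ℝ) 1)
    (η : ℝ) (K τ : ℕ) (hK : 1 ≤ K) (hτ : 1 ≤ τ)
    (B : ℝ)
    (u Q : Fin (τ * K) → Ω → EuclideanSpace ℝ (Fin d))
    (huL2 : ∀ i, MemLp (u i) 2 μ) (hQL2 : ∀ i, MemLp (Q i) 2 μ)
    (hubd : ∀ i, ∫ ω, ‖u i ω‖ ^ 2 ∂μ ≤ B)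
    (hcomp : ∀ i, ∫ ω, ‖Q i ω - u i ω‖ ^ 2 ∂μ ≤ (1 - δc) * ∫ ω, ‖u i ω‖ ^ 2 ∂μ)
    (huncorr : ∀ i j, i ≠ j → ∫ ω, ⟪Q i ω - u i ω, Q j ω - u j ω⟫ ∂μ = 0)
    (horth : ∀ i, ∫ ω, ⟪Q i ω - u i ω, ∑ j, u j ω⟫ ∂μ = 0) :
    ∫ ω, ‖(η / (K : ℝ)) • ∑ i, Q i ω‖ ^ 2 ∂μ ≤
      η ^ 2 * (τ : ℝ) ^ 2 * B * (1 + (1 - δc) / ((K : ℝ) * (τ : ℝ))) := by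
  have hbound := integral_norm_sum_sq_le_of_orthogonal_compression_errors hδc.2 huL2 hQL2
    hubd hcomp huncorr horth
  have hK0 : (K : ℝ) ≠ 0 := Nat.cast_ne_zero.2 (Nat.one_le_iff_ne_zero.1 hK)
  have hτ0 : (τ : ℝ) ≠ 0 := Nat.cast_ne_zero.2 (Nat.one_le_iff_ne_zero.1 hτ)
  simp_rw [norm_smul, mul_pow, Real.norm_eq_abs, sq_abs]
  rw [integral_const_mul]
  calc (η / K) ^ 2 * ∫ ω, ‖∑ i, Q i ω‖ ^ 2 ∂μ
      ≤ (η / K) ^ 2 * (Fintype.card (Fin (τ * K)) ^ 2 * B +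
          (1 - δc) * (Fintype.card (Fin (τ * K)) * B)) := by gcongr
    _ = η ^ 2 * τ ^ 2 * B * (1 + (1 - δc) / (K * τ)) := by
        rw [Fintype.card_fin]
        push_cast
        field_simp

/-- Staleness bound of the paper (Appendix E, bound-staleness). -/
theorem staleness_bound
    {Ω : Type*} [MeasurableSpace Ω] (μ : Measure Ω) [IsProbabilityMeasure μ]
    (d : ℕ) (hd : 1 ≤ d) (δc : ℝ) (hδc : δc ∈ Set.Ioc (0 : ℝ) 1)
    (η : ℝ) (hη : 0 < η) (K τ : ℕ) (hK : 1 ≤ K) (hτ : 1 ≤ τ)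
    (B : ℝ) (hB : 0 ≤ B)
    (u Q : Fin (τ * K) → Ω → EuclideanSpace ℝ (Fin d))
    (huL2 : ∀ i, MemLp (u i) 2 μ) (hQL2 : ∀ i, MemLp (Q i) 2 μ)
    (hubd : ∀ i, ∫ ω, ‖u i ω‖ ^ 2 ∂μ ≤ B)
    (hcomp : ∀ i, ∫ ω, ‖Q i ω - u i ω‖ ^ 2 ∂μ ≤ (1 - δc) * ∫ ω, ‖u i ω‖ ^ 2 ∂μ)
    (huncorr : ∀ i j, i ≠ j → ∫ ω, ⟪Q i ω - u i ω, Q j ω - u j ω⟫ ∂μ = 0)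
    (horth : ∀ i, ∫ ω, ⟪Q i ω - u i ω, ∑ j, u j ω⟫ ∂μ = 0) :
    ∫ ω, ‖(η / (K : ℝ)) • ∑ i, Q i ω‖ ^ 2 ∂μ ≤
      η ^ 2 * (τ : ℝ) ^ 2 * B * (1 + (1 - δc) / ((K : ℝ) * (τ : ℝ))) :=
  staleness_bound_general μ d δc hδc η K τ hK hτ B u Q huL2 hQL2 hubd hcomp huncorr horth
end
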